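/- arXiv:2511.22545 — 7 statements merged into one kernel-verified Lean document; each statement's English description precedes it below -/
import Mathlib

section
/- Let p be a prime and let d ≤ n be positive integers. Let ρ_1, …, ρ_n ∈ ℤ^d be such that (ρ_1, …, ρ_d) is a ℤ-basis of ℤ^d. Assume (i) there exist positive integers b_1, …, b_n with b_1ρ_1 + … + b_nρ_n = 0, and (ii) there exist integers c_1, …, c_n with c_1ρ_1 + … + c_nρ_n = 0 such that p does not divide c_i for each i = 1, …, d. Then for every integer m₀ there exist integers a_1, …, a_n, all strictly greater than m₀ (in particular all positive), such that a_1ρ_1 + … + a_nρ_n = 0, the subgroup L of ℤ^d generated by a_1ρ_1, …, a_nρ_n has finite index in ℤ^d, and the quotient ℤ^d/L has no p-torsion, i.e. for every x ∈ ℤ^d, if p·x ∈ L then x ∈ L. -/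
/-!
Put `a = p k b + c` with `k` large. Then `∑ aᵢ ρᵢ = 0`, every `aᵢ` exceeds `m₀`, and
`aᵢ ≡ cᵢ (mod p)`, so `p` divides none of `a₁, …, a_d`. Since `ρ₁, …, ρ_d` is a basis,
`q = a₁ ⋯ a_d` kills `ℤ^d / L`: this makes the quotient finite, and `q` is prime to `p`,
so the quotient has no `p`-torsion.
-/

open Filter

theorem Int.exists_forall_lt_mul_mul_add {ι : Type*} [Finite ι] {p : ℤ} (hp : 0 < p)
    {b : ι → ℤ} (hb : ∀ i, 0 < b i) (c : ι → ℤ) (m : ℤ) :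
    ∃ k : ℤ, ∀ i, m < p * k * b i + c i := by
  have hlarge : ∀ i, ∀ᶠ k : ℤ in atTop, m < p * k * b i + c i := fun i => by
    filter_upwards [eventually_gt_atTop (m - c i), eventually_ge_atTop 0] with k hk hk0
    calc m < k + c i := by linarith
      _ ≤ k * (p * b i) + c i := by gcongr; exact le_mul_of_one_le_right hk0 (mul_pos hp (hb i))
      _ = p * k * b i + c i := by ring
  exact (eventually_all.2 hlarge).exists

theorem Submodule.mem_of_isCoprime_of_smul_mem {R M : Type*} [CommSemiring R]
    [AddCommMonoid M] [Module R M] (L : Submodule R M) {p q : R} (hpq : IsCoprime p q)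
    {x : M} (hp : p • x ∈ L) (hq : q • x ∈ L) : x ∈ L := by
  obtain ⟨u, v, huv⟩ := hpq
  have hx : x = u • p • x + v • q • x := by
    rw [smul_smul, smul_smul, ← add_smul, huv, one_smul]
  rw [hx]
  exact L.add_mem (L.smul_mem u hp) (L.smul_mem v hq)

theorem Module.Basis.prod_smul_mem {ι R M : Type*} [Fintype ι] [CommSemiring R]
    [AddCommMonoid M] [Module R M] (B : Module.Basis ι R M) (L : Submodule R M) {s : ι → R}
    (hs : ∀ i, s i • B i ∈ L) (x : M) : (∏ i, s i) • x ∈ L := by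
  classical
  rw [← B.sum_repr x, Finset.smul_sum]
  refine L.sum_mem fun i _ => ?_
  rw [smul_smul, ← Finset.prod_erase_mul _ _ (Finset.mem_univ i), mul_right_comm, mul_smul]
  exact L.smul_mem _ (hs i)

theorem Submodule.finiteIndex_of_smul_mem {M : Type*} [AddCommGroup M] [Module.Finite ℤ M]
    (L : Submodule ℤ M) {q : ℤ} (hq : q ≠ 0) (hqL : ∀ x, q • x ∈ L) :
    L.toAddSubgroup.FiniteIndex := by
  have htorsion : Module.IsTorsion ℤ (M ⧸ L) := by
    intro y
    obtain ⟨x, rfl⟩ := L.mkQ_surjective y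
    exact ⟨⟨q, mem_nonZeroDivisors_of_ne_zero hq⟩, (Submodule.Quotient.mk_eq_zero L).2 (hqL x)⟩
  have : Finite (M ⧸ L) := Module.finite_of_fg_torsion _ htorsion
  have : Finite (M ⧸ L.toAddSubgroup) := this
  exact AddSubgroup.finiteIndex_of_finite_quotient

theorem stmt0_general (p : ℕ) (hp : p.Prime) (d n : ℕ) (hdn : d ≤ n)
    (ρ : Fin n → (Fin d → ℤ))
    (hbasis : ∃ B : Module.Basis (Fin d) ℤ (Fin d → ℤ), ∀ i : Fin d, B i = ρ (Fin.castLE hdn i))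
    (hb : ∃ b : Fin n → ℤ, (∀ i, 0 < b i) ∧ ∑ i, b i • ρ i = 0)
    (hc : ∃ c : Fin n → ℤ, (∑ i, c i • ρ i = 0) ∧
      ∀ i : Fin d, ¬ (p : ℤ) ∣ c (Fin.castLE hdn i)) :
    ∀ m₀ : ℤ, ∃ a : Fin n → ℤ, (∀ i, m₀ < a i) ∧ ∑ i, a i • ρ i = 0 ∧
      (Submodule.span ℤ (Set.range fun i => a i • ρ i)).toAddSubgroup.FiniteIndex ∧
      ∀ x : Fin d → ℤ, (p : ℤ) • x ∈ Submodule.span ℤ (Set.range fun i => a i • ρ i) →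
        x ∈ Submodule.span ℤ (Set.range fun i => a i • ρ i) := by
  obtain ⟨B, hB⟩ := hbasis
  obtain ⟨b, hb_pos, hb_sum⟩ := hb
  obtain ⟨c, hc_sum, hc_ndvd⟩ := hc
  intro m₀
  have hp' : Prime (p : ℤ) := Nat.prime_iff_prime_int.mp hp
  obtain ⟨k, hk⟩ :=
    Int.exists_forall_lt_mul_mul_add (p := p) (by exact_mod_cast hp.pos) hb_pos c m₀
  set a : Fin n → ℤ := fun i => p * k * b i + c i
  set L := Submodule.span ℤ (Set.range fun i => a i • ρ i)
  have ha_sum : ∑ i, a i • ρ i = 0 := by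
    simp only [a, add_smul, mul_smul, Finset.sum_add_distrib, ← Finset.smul_sum, hb_sum,
      hc_sum, smul_zero, add_zero]
  have ha_ndvd (i : Fin d) : ¬ (p : ℤ) ∣ a (Fin.castLE hdn i) := by
    rw [Int.dvd_add_right (dvd_mul_of_dvd_left (dvd_mul_right _ _) _)]
    exact hc_ndvd i
  set q := ∏ i : Fin d, a (Fin.castLE hdn i)
  have hqL (x : Fin d → ℤ) : q • x ∈ L :=
    B.prod_smul_mem L (fun i => hB i ▸ Submodule.subset_span ⟨_, rfl⟩) x
  have hpq : IsCoprime (p : ℤ) q :=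
    IsCoprime.prod_right fun i _ => (hp'.irreducible.coprime_iff_not_dvd).2 (ha_ndvd i)
  have hq : q ≠ 0 := fun h => hp'.not_isUnit (isCoprime_zero_right.1 (h ▸ hpq))
  exact ⟨a, hk, ha_sum, L.finiteIndex_of_smul_mem hq hqL,
    fun x hx => L.mem_of_isCoprime_of_smul_mem hpq hx (hqL x)⟩

/-- Arithmetic core of Theorem 3.1: smooth Campana toric orbifolds are separably
Campana rationally connected. The `ρ i` are the primitive ray generators; the first `d`
of them form a `ℤ`-basis of `ℤ^d` (smoothness of a maximal cone and its neighbors). -/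
theorem stmt0 (p : ℕ) (hp : p.Prime) (d n : ℕ) (hd : 0 < d) (hdn : d ≤ n)
    (ρ : Fin n → (Fin d → ℤ))
    (hbasis : ∃ B : Module.Basis (Fin d) ℤ (Fin d → ℤ), ∀ i : Fin d, B i = ρ (Fin.castLE hdn i))
    (hb : ∃ b : Fin n → ℤ, (∀ i, 0 < b i) ∧ ∑ i, b i • ρ i = 0)
    (hc : ∃ c : Fin n → ℤ, (∑ i, c i • ρ i = 0) ∧
      ∀ i : Fin d, ¬ (p : ℤ) ∣ c (Fin.castLE hdn i)) :
    ∀ m₀ : ℤ, ∃ a : Fin n → ℤ, (∀ i, m₀ < a i) ∧ ∑ i, a i • ρ i = 0 ∧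
      (Submodule.span ℤ (Set.range fun i => a i • ρ i)).toAddSubgroup.FiniteIndex ∧
      ∀ x : Fin d → ℤ, (p : ℤ) • x ∈ Submodule.span ℤ (Set.range fun i => a i • ρ i) →
        x ∈ Submodule.span ℤ (Set.range fun i => a i • ρ i) :=
  stmt0_general p hp d n hdn ρ hbasis hb hc
end

section
/- Let p be a prime and let R be a 2 × n matrix with integer entries such that at least one 2 × 2 minor of R is not divisible by p (equivalently, the product d₁d₂ of the two invariant factors in the Smith normal form of R is prime to p). Then the reduction-mod-p map from the integer kernel {y ∈ ℤ^n : Ry = 0} to the mod-p kernel {ȳ ∈ (ℤ/pℤ)^n : R̄ȳ = 0} is surjective, where R̄ is the entrywise reduction of R modulo p. Moreover, if there exists b ∈ ℤ^n with all coordinates strictly positive and Rb = 0, then every element ȳ of the mod-p kernel admits a lift y ∈ ℤ^n with Ry = 0, all coordinates of y strictly positive, and y ≡ ȳ modulo p. -/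
theorem surj_aux (p : ℕ) (hp : p.Prime) (n : ℕ) (R : Matrix (Fin 2) (Fin n) ℤ)
    (hminor : ∃ i j : Fin n, ¬ (p : ℤ) ∣ (R 0 i * R 1 j - R 0 j * R 1 i))
    (ybar : Fin n → ZMod p)
    (hker : ∀ r : Fin 2, ∑ j, (R r j : ZMod p) * ybar j = 0) :
    ∃ y : Fin n → ℤ, R.mulVec y = 0 ∧ ∀ j, ((y j : ZMod p)) = ybar j := by
  haveI : Fact p.Prime := ⟨hp⟩
  obtain ⟨i, j, hD⟩ := hminor
  set D : ℤ := R 0 i * R 1 j - R 0 j * R 1 i with hDdef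
  obtain ⟨s, t, hst⟩ : IsCoprime D (p : ℤ) :=
    ((Nat.prime_iff_prime_int.mp hp).coprime_iff_not_dvd.mpr hD).symm
  set z : Fin n → ℤ := fun k => ((ybar k).val : ℤ) with hzdef
  have hz : ∀ k, ((z k : ZMod p)) = ybar k := by
    intro k
    simp [hzdef, ZMod.natCast_val, ZMod.cast_id]
  have hdvd : ∀ r : Fin 2, (p : ℤ) ∣ ∑ k, R r k * z k := by
    intro r
    have : ((∑ k, R r k * z k : ℤ) : ZMod p) = 0 := by
      push_cast
      simp only [hz]
      exact hker r
    exact (ZMod.intCast_zmod_eq_zero_iff_dvd _ p).mp this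
  set c : Fin 2 → ℤ := fun r => (∑ k, R r k * z k) / p with hcdef
  have hc : ∀ r, ∑ k, R r k * z k = p * c r := fun r => (Int.mul_ediv_cancel' (hdvd r)).symm
  set w0 : ℤ := R 1 j * c 0 - R 0 j * c 1 with hw0def
  set w1 : ℤ := R 0 i * c 1 - R 1 i * c 0 with hw1def
  refine ⟨fun k => z k - s * p * (if k = i then w0 else 0)
      - s * p * (if k = j then w1 else 0) - t * p * z k, ?_, ?_⟩
  · funext r
    have hw : R r i * w0 + R r j * w1 = D * c r := by
      fin_cases r
      · show R 0 i * w0 + R 0 j * w1 = D * c 0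
        simp only [hw0def, hw1def, hDdef]; ring
      · show R 1 i * w0 + R 1 j * w1 = D * c 1
        simp only [hw0def, hw1def, hDdef]; ring
    have expand : ∑ k, R r k * (z k - s * p * (if k = i then w0 else 0)
        - s * p * (if k = j then w1 else 0) - t * p * z k)
        = (∑ k, R r k * z k) - R r i * (s * p * w0) - R r j * (s * p * w1)
          - t * p * (∑ k, R r k * z k) := by
      have h1 : ∀ k, R r k * (z k - s * p * (if k = i then w0 else 0)
          - s * p * (if k = j then w1 else 0) - t * p * z k)
          = R r k * z k - (if k = i then R r k * (s * p * w0) else 0)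
            - (if k = j then R r k * (s * p * w1) else 0) - t * p * (R r k * z k) := by
        intro k; split_ifs <;> ring
      rw [Finset.sum_congr rfl fun k _ => h1 k, Finset.sum_sub_distrib,
        Finset.sum_sub_distrib, Finset.sum_sub_distrib, Finset.sum_ite_eq' Finset.univ i,
        Finset.sum_ite_eq' Finset.univ j, ← Finset.mul_sum]
      simp
    have := hc r
    simp only [Matrix.mulVec, dotProduct, Pi.zero_apply]
    rw [expand]
    linear_combination (1 - t * (p : ℤ)) * hc r - s * (p : ℤ) * hw - (p : ℤ) * c r * hst
  · intro k
    push_cast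
    simp [ZMod.natCast_self, hz k]


/-- Lemma 4.4: if some `2 × 2` minor of the integer `2 × n` matrix `R` is prime to `p`,
then the reduction map from the integer kernel of `R` to the mod-`p` kernel of `R̄` is
surjective; moreover if `R` has a strictly positive integer kernel vector, then every
mod-`p` kernel vector lifts to a strictly positive integer kernel vector. -/
theorem stmt2 (p : ℕ) (hp : p.Prime) (n : ℕ) (R : Matrix (Fin 2) (Fin n) ℤ)
    (hminor : ∃ i j : Fin n, ¬ (p : ℤ) ∣ (R 0 i * R 1 j - R 0 j * R 1 i)) :
    (∀ ybar : Fin n → ZMod p,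
      (∀ r : Fin 2, ∑ j, (R r j : ZMod p) * ybar j = 0) →
      ∃ y : Fin n → ℤ, R.mulVec y = 0 ∧ ∀ j, ((y j : ZMod p)) = ybar j) ∧
    ((∃ b : Fin n → ℤ, (∀ j, 0 < b j) ∧ R.mulVec b = 0) →
      ∀ ybar : Fin n → ZMod p,
        (∀ r : Fin 2, ∑ j, (R r j : ZMod p) * ybar j = 0) →
        ∃ y : Fin n → ℤ, R.mulVec y = 0 ∧ (∀ j, 0 < y j) ∧
          ∀ j, ((y j : ZMod p)) = ybar j) := by
  refine ⟨surj_aux p hp n R hminor, ?_⟩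
  rintro ⟨b, hbpos, hbker⟩ ybar hker
  obtain ⟨y, hy, hmod⟩ := surj_aux p hp n R hminor ybar hker
  set N : ℤ := ((Finset.univ.sup fun k => (-(y k)).toNat : ℕ) : ℤ) + 1 with hNdef
  have hN1 : (1 : ℤ) ≤ N := by
    rw [hNdef]
    have := Int.natCast_nonneg (Finset.univ.sup fun k => (-(y k)).toNat)
    linarith
  have hNy : ∀ k, -(y k) < N := by
    intro k
    have h1 : (-(y k)).toNat ≤ Finset.univ.sup fun k => (-(y k)).toNat :=
      Finset.le_sup (f := fun k => (-(y k)).toNat) (Finset.mem_univ k)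
    have h2 : -(y k) ≤ ((-(y k)).toNat : ℤ) := Int.self_le_toNat _
    have h3 : (((-(y k)).toNat : ℕ) : ℤ) ≤ ((Finset.univ.sup fun k => (-(y k)).toNat : ℕ) : ℤ) := by
      exact_mod_cast h1
    omega
  refine ⟨fun k => y k + N * p * b k, ?_, ?_, ?_⟩
  · funext r
    have h1 : ∑ k, R r k * y k = 0 := by
      have := congrFun hy r
      simpa [Matrix.mulVec, dotProduct] using this
    have h2 : ∑ k, R r k * b k = 0 := by
      have := congrFun hbker r
      simpa [Matrix.mulVec, dotProduct] using this
    simp only [Matrix.mulVec, dotProduct, Pi.zero_apply]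
    calc ∑ k, R r k * (y k + N * p * b k)
        = (∑ k, R r k * y k) + N * p * ∑ k, R r k * b k := by
          rw [Finset.mul_sum, ← Finset.sum_add_distrib]
          exact Finset.sum_congr rfl fun k _ => by ring
      _ = 0 := by rw [h1, h2]; ring
  · intro k
    have hb : (1 : ℤ) ≤ b k := hbpos k
    have hpp : (1 : ℤ) ≤ (p : ℤ) := by exact_mod_cast hp.one_lt.le
    have h3 : N ≤ N * p * b k := by
      have h4 : (1 : ℤ) ≤ (p : ℤ) * b k := one_le_mul_of_one_le_of_one_le hpp hb
      nlinarith
    have := hNy k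
    show 0 < y k + N * p * b k
    linarith
  · intro k
    push_cast
    simp [ZMod.natCast_self, hmod k]
end

section
/- Let p be a prime and let ρ_1, …, ρ_n ∈ ℤ². Assume there exist positive integers b_1, …, b_n with b_1ρ_1 + … + b_nρ_n = 0. Suppose there exist elements c̄_1, …, c̄_n ∈ ℤ/pℤ such that c̄_1ρ̄_1 + … + c̄_nρ̄_n = 0 in (ℤ/pℤ)², where ρ̄_i denotes the reduction of ρ_i modulo p, and such that there are indices i ≠ j with c̄_i ≠ 0, c̄_j ≠ 0, and det(ρ_i | ρ_j) not divisible by p, where det(ρ_i | ρ_j) is the determinant of the 2 × 2 matrix with columns ρ_i and ρ_j. Then there exist positive integers c_1, …, c_n with c_i ≡ c̄_i modulo p for all i, such that c_1ρ_1 + … + c_nρ_n = 0, the subgroup M of ℤ² generated by c_1ρ_1, …, c_nρ_n has finite index in ℤ², and ℤ²/M has no p-torsion, i.e. for every x ∈ ℤ², if p·x ∈ M then x ∈ M. -/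
/-- Coordinatewise reduction modulo `p` of a family of vectors in `ℤ²`. -/
def redMod (p : ℕ) {n : ℕ} (ρ : Fin n → (Fin 2 → ℤ)) : Fin n → (Fin 2 → ZMod p) :=
  fun i k => (ρ i k : ZMod p)

private lemma cramer2 (u v x : Fin 2 → ℤ) :
    (u 0 * v 1 - u 1 * v 0) • x = (x 0 * v 1 - x 1 * v 0) • u + (u 0 * x 1 - u 1 * x 0) • v := by
  funext k; fin_cases k <;> simp [Pi.smul_apply, smul_eq_mul] <;> ring

private lemma coprime_of_not_dvd (p : ℕ) (hp : p.Prime) (D : ℤ) (h : ¬ (p:ℤ) ∣ D) :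
    IsCoprime (p:ℤ) D :=
  (Int.prime_iff_natAbs_prime.mpr (by simpa using hp)).coprime_iff_not_dvd.mpr h

/-- Combinatorial core of Lemma 4.2 ('reduce mod p'): a mod-`p` relation among the rays
with two coefficients nonzero at indices whose determinant is prime to `p` lifts to a
positive integral relation whose terms generate a finite-index sublattice of `ℤ²` with
`p`-torsion-free quotient. -/
theorem stmt3 (p : ℕ) (hp : p.Prime) (n : ℕ) (ρ : Fin n → (Fin 2 → ℤ))
    (hb : ∃ b : Fin n → ℤ, (∀ i, 0 < b i) ∧ ∑ i, b i • ρ i = 0)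
    (cbar : Fin n → ZMod p)
    (hrel : ∑ i, cbar i • redMod p ρ i = 0)
    (i j : Fin n) (hij : i ≠ j) (hci : cbar i ≠ 0) (hcj : cbar j ≠ 0)
    (hdet : ¬ (p : ℤ) ∣ (ρ i 0 * ρ j 1 - ρ i 1 * ρ j 0)) :
    ∃ c : Fin n → ℤ, (∀ k, 0 < c k) ∧ (∀ k, ((c k : ZMod p)) = cbar k) ∧
      ∑ k, c k • ρ k = 0 ∧
      (Submodule.span ℤ (Set.range fun k => c k • ρ k)).toAddSubgroup.FiniteIndex ∧
      ∀ x : Fin 2 → ℤ, (p : ℤ) • x ∈ Submodule.span ℤ (Set.range fun k => c k • ρ k) →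
        x ∈ Submodule.span ℤ (Set.range fun k => c k • ρ k) := by
  haveI : NeZero p := ⟨hp.ne_zero⟩
  have hp0 : (0:ℤ) < (p:ℤ) := by exact_mod_cast hp.pos
  obtain ⟨b, hbpos, hbsum⟩ := hb
  set c₀ : Fin n → ℤ := fun k => ((cbar k).val : ℤ) with hc₀
  have hc₀cast : ∀ k, ((c₀ k : ZMod p)) = cbar k := by
    intro k
    push_cast [hc₀, ZMod.natCast_val, ZMod.cast_id]
    rfl
  set s : Fin 2 → ℤ := ∑ k, c₀ k • ρ k with hs
  have hsl : ∀ l, (p:ℤ) ∣ s l := by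
    intro l
    rw [← ZMod.intCast_zmod_eq_zero_iff_dvd]
    have h0 := congrFun hrel l
    simp only [Finset.sum_apply, Pi.smul_apply, smul_eq_mul, Pi.zero_apply, redMod] at h0
    rw [hs]
    push_cast [Finset.sum_apply, Pi.smul_apply, smul_eq_mul]
    rw [← h0]
    exact Finset.sum_congr rfl fun k _ => by rw [hc₀cast]
  set v : Fin 2 → ℤ := fun l => s l / p with hv
  have hpv : (p:ℤ) • v = s := by
    funext l
    simp only [Pi.smul_apply, hv, smul_eq_mul]
    exact Int.mul_ediv_cancel' (hsl l)
  set D : ℤ := ρ i 0 * ρ j 1 - ρ i 1 * ρ j 0 with hD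
  obtain ⟨u, w, huw⟩ := coprime_of_not_dvd p hp D hdet
  set a : ℤ := v 0 * ρ j 1 - v 1 * ρ j 0 with ha
  set bb : ℤ := ρ i 0 * v 1 - ρ i 1 * v 0 with hbb
  have hcr : D • v = a • ρ i + bb • ρ j := cramer2 (ρ i) (ρ j) v
  set e : Fin n → ℤ := fun k =>
    u * c₀ k + (if k = i then w * a else 0) + (if k = j then w * bb else 0) with he
  have hesum : ∑ k, e k • ρ k = v := by
    have h1 : ∑ k, e k • ρ k = u • s + (w * a) • ρ i + (w * bb) • ρ j := by
      simp only [he, add_smul, Finset.sum_add_distrib, ite_smul, zero_smul,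
        Finset.sum_ite_eq', Finset.mem_univ, if_true, mul_smul, hs, Finset.smul_sum]
    rw [h1, ← hpv, mul_smul, mul_smul, add_assoc, ← smul_add, ← hcr,
      smul_smul, smul_smul, ← add_smul, huw, one_smul]
  -- choose the shift
  set S : ℤ := ∑ k, |e k| with hS
  set t : ℤ := 1 + S with ht
  set c : Fin n → ℤ := fun k => c₀ k - p * e k + p * t * b k with hc
  have heS : ∀ k, e k ≤ S := fun k =>
    le_trans (le_abs_self _)
      (Finset.single_le_sum (fun k _ => abs_nonneg (e k)) (Finset.mem_univ k))
  have hcpos : ∀ k, 0 < c k := by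
    intro k
    have h0 : (0:ℤ) ≤ c₀ k := Int.natCast_nonneg _
    have hbk := hbpos k
    have hek := heS k
    have h1 : p * t * 1 ≤ p * t * b k := by
      apply mul_le_mul_of_nonneg_left hbk
      nlinarith [abs_nonneg (e k), heS k, Finset.single_le_sum (f := fun k => |e k|) (fun k _ => abs_nonneg (e k)) (Finset.mem_univ k)]
    have h2 : p * e k + p ≤ p * t := by
      have : e k + 1 ≤ t := by simp only [ht]; linarith
      nlinarith
    simp only [hc]
    nlinarith
  have hccast : ∀ k, ((c k : ZMod p)) = cbar k := by
    intro k
    simp only [hc]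
    push_cast
    simp [ZMod.natCast_self, hc₀cast k]
  have hcsum : ∑ k, c k • ρ k = 0 := by
    have : ∑ k, c k • ρ k = s - (p:ℤ) • (∑ k, e k • ρ k) + ((p:ℤ) * t) • (∑ k, b k • ρ k) := by
      simp only [hc, sub_smul, add_smul, Finset.sum_add_distrib, Finset.sum_sub_distrib,
        mul_smul, Finset.smul_sum, hs]
    rw [this, hesum, hbsum, hpv, smul_zero, sub_self, zero_add]
  set M : Submodule ℤ (Fin 2 → ℤ) := Submodule.span ℤ (Set.range fun k => c k • ρ k) with hM
  have hiM : c i • ρ i ∈ M := Submodule.subset_span ⟨i, rfl⟩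
  have hjM : c j • ρ j ∈ M := Submodule.subset_span ⟨j, rfl⟩
  set D' : ℤ := c i * c j * D with hD'
  have hD'x : ∀ x : Fin 2 → ℤ, D' • x ∈ M := by
    intro x
    have hcr2 := cramer2 (c i • ρ i) (c j • ρ j) x
    have hdet' : (c i • ρ i) 0 * (c j • ρ j) 1 - (c i • ρ i) 1 * (c j • ρ j) 0 = D' := by
      simp only [Pi.smul_apply, smul_eq_mul, hD', hD]; ring
    rw [hdet'] at hcr2
    rw [hcr2]
    exact M.add_mem (M.smul_mem _ hiM) (M.smul_mem _ hjM)
  have hpci : ¬ (p:ℤ) ∣ c i := by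
    rw [Ne, ← hccast i] at hci
    rwa [← ZMod.intCast_zmod_eq_zero_iff_dvd]
  have hpcj : ¬ (p:ℤ) ∣ c j := by
    rw [Ne, ← hccast j] at hcj
    rwa [← ZMod.intCast_zmod_eq_zero_iff_dvd]
  have hpD' : ¬ (p:ℤ) ∣ D' := by
    intro hdvd
    have hprime : Prime ((p:ℤ)) := Int.prime_iff_natAbs_prime.mpr (by simpa using hp)
    rcases hprime.dvd_mul.mp hdvd with h | h
    · rcases hprime.dvd_mul.mp h with h' | h'
      · exact hpci h'
      · exact hpcj h'
    · exact hdet h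
  have hD'0 : D' ≠ 0 := fun h0 => hpD' (h0 ▸ dvd_zero _)
  refine ⟨c, hcpos, hccast, hcsum, ?_, ?_⟩
  · -- finite index
    have hfin : Finite ((Fin 2 → ℤ) ⧸ M.toAddSubgroup) := by
      set d : ℕ := D'.natAbs with hd
      haveI : NeZero d := ⟨by simpa [hd, Int.natAbs_eq_zero] using hD'0⟩
      refine Finite.of_surjective
        (fun y : Fin 2 → ZMod d =>
          (QuotientAddGroup.mk (fun l => ((y l).val : ℤ)) : (Fin 2 → ℤ) ⧸ M.toAddSubgroup)) ?_
      intro q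
      obtain ⟨x, rfl⟩ := QuotientAddGroup.mk_surjective q
      refine ⟨fun l => ((x l : ZMod d)), ?_⟩
      apply QuotientAddGroup.eq.mpr
      set r : Fin 2 → ℤ := fun l => (((x l : ZMod d)).val : ℤ) with hr
      have hdl : ∀ l, D' ∣ (x l - r l) := by
        intro l
        rw [← Int.natAbs_dvd, ← ZMod.intCast_zmod_eq_zero_iff_dvd]
        push_cast [hr, ZMod.natCast_val, ZMod.cast_id]
        ring
      set z : Fin 2 → ℤ := fun l => (x l - r l) / D' with hz
      have hzeq : D' • z = x - r := by
        funext l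
        simp only [Pi.smul_apply, Pi.sub_apply, hz, smul_eq_mul]
        exact Int.mul_ediv_cancel' (hdl l)
      have : x - r ∈ M := hzeq ▸ hD'x z
      show -r + x ∈ M.toAddSubgroup
      rwa [neg_add_eq_sub, Submodule.mem_toAddSubgroup]
    exact ⟨M.toAddSubgroup.index_ne_zero_of_finite⟩
  · -- p-torsion-free
    intro x hx
    obtain ⟨α, β, hαβ⟩ := coprime_of_not_dvd p hp D' hpD'
    have : x = α • ((p:ℤ) • x) + β • (D' • x) := by
      rw [smul_smul, smul_smul, ← add_smul, hαβ, one_smul]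
    rw [this]
    exact M.add_mem (M.smul_mem _ hx) (M.smul_mem _ (hD'x x))
end

section
/- Let p be a prime and let ρ_1, …, ρ_n ∈ ℤ² be primitive vectors, i.e. the two coordinates of each ρ_i have greatest common divisor 1. Let ρ̄_i ∈ (ℤ/pℤ)² denote the reduction of ρ_i modulo p. Then the following two conditions are equivalent. (A) There exist indices m ≠ l such that {ρ̄_m, ρ̄_l} is an 𝔽_p-basis of the 𝔽_p-span of {ρ̄_1, …, ρ̄_n}, and moreover either (b1) there exists an index k with ρ̄_k = a·ρ̄_m + b·ρ̄_l for some a, b ∈ ℤ/pℤ both nonzero, or (b2) there exists an index s ≠ m with ρ̄_s a nonzero scalar multiple of ρ̄_m and an index t ≠ l with ρ̄_t a nonzero scalar multiple of ρ̄_l. (B) There exist c̄_1, …, c̄_n ∈ ℤ/pℤ with c̄_1ρ̄_1 + … + c̄_nρ̄_n = 0 and indices i ≠ j such that c̄_i, c̄_j, and det(ρ̄_i | ρ̄_j) are all nonzero in ℤ/pℤ, where det(ρ̄_i | ρ̄_j) is the determinant of the 2 × 2 matrix over ℤ/pℤ with columns ρ̄_i and ρ̄_j. -/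
open Submodule

theorem Finset.exists_ne_apply_ne_zero_of_sum_eq_zero {ι M : Type*} [Fintype ι] [AddCommGroup M]
    {f : ι → M} (hf : ∑ j, f j = 0) {i : ι} (hi : f i ≠ 0) : ∃ j, j ≠ i ∧ f j ≠ 0 := by
  classical
  have hrest : ∑ j ∈ univ.erase i, f j ≠ 0 := by
    rwa [sum_erase_eq_sub (mem_univ i), hf, zero_sub, neg_ne_zero]
  obtain ⟨j, hj, hfj⟩ := exists_ne_zero_of_sum_ne_zero hrest
  exact ⟨j, ne_of_mem_erase hj, hfj⟩

theorem linearIndependent_pair_iff_det_ne_zero {K : Type*} [Field K] (u w : Fin 2 → K) :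
    LinearIndependent K ![u, w] ↔ u 0 * w 1 - u 1 * w 0 ≠ 0 := by
  have h := Matrix.linearIndependent_rows_iff_isUnit (A := Matrix.of ![u, w])
  rwa [Matrix.isUnit_iff_isUnit_det, isUnit_iff_ne_zero, Matrix.det_fin_two] at h

theorem LinearIndependent.span_pair_eq_top {K : Type*} [Field K] {u w : Fin 2 → K}
    (h : LinearIndependent K ![u, w]) : span K {u, w} = ⊤ := by
  rw [← Matrix.range_cons_cons_empty]
  exact h.span_eq_top_of_card_eq_finrank (by simp)

section SupportedPair

variable (K : Type*) {V ι : Type*} [Field K] [AddCommGroup V] [Module K V]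

/-- Condition (b1) ∨ (b2) of Proposition 4.1 for the pair `v m, v l`. -/
def IsSupportedPair (v : ι → V) (m l : ι) : Prop :=
  (∃ k : ι, ∃ a b : K, a ≠ 0 ∧ b ≠ 0 ∧ v k = a • v m + b • v l) ∨
    ((∃ s : ι, s ≠ m ∧ ∃ a : K, a ≠ 0 ∧ v s = a • v m) ∧
      (∃ t : ι, t ≠ l ∧ ∃ b : K, b ≠ 0 ∧ v t = b • v l))

variable {K} [Fintype ι] {v : ι → V} {m l : ι}

theorem sum_pi_single_smul [DecidableEq ι] (i : ι) (a : K) :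
    ∑ k, (Pi.single i a : ι → K) k • v k = a • v i := by
  simp [Pi.single_apply, ite_smul]

theorem LinearIndependent.exists_sum_smul_eq_zero_of_isSupportedPair
    (hind : LinearIndependent K ![v m, v l]) (hml : m ≠ l) (h : IsSupportedPair K v m l) :
    ∃ c : ι → K, ∑ k, c k • v k = 0 ∧ c m ≠ 0 ∧ c l ≠ 0 := by
  classical
  rcases h with ⟨k, a, b, ha, hb, hk⟩ | ⟨⟨s, hsm, a, ha, hs⟩, t, htl, b, hb, ht⟩
  · have hkm : k ≠ m := by
      rintro rfl
      exact hb (hind.eq_of_pair (s' := 1) (t' := 0) (hk.symm.trans (by simp))).2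
    have hkl : k ≠ l := by
      rintro rfl
      exact ha (hind.eq_of_pair (s' := 0) (t' := 1) (hk.symm.trans (by simp))).1
    refine ⟨Pi.single m a + Pi.single l b - Pi.single k 1, ?_, ?_, ?_⟩
    · simp only [Pi.add_apply, Pi.sub_apply, add_smul, sub_smul, Finset.sum_add_distrib,
        Finset.sum_sub_distrib, sum_pi_single_smul, hk, one_smul, sub_self]
    · simp [hml, hkm.symm, ha]
    · simp [hml.symm, hkl.symm, hb]
  · have hsl : s ≠ l := by
      rintro rfl
      exact ha (hind.eq_of_pair (s := a) (t := 0) (s' := 0) (t' := 1) (by simp [← hs])).1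
    have htm : t ≠ m := by
      rintro rfl
      exact hb (hind.eq_of_pair (s := 1) (t := 0) (s' := 0) (t' := b) (by simp [← ht])).2.symm
    refine ⟨Pi.single m a + Pi.single l b - Pi.single s 1 - Pi.single t 1, ?_, ?_, ?_⟩
    · simp only [Pi.add_apply, Pi.sub_apply, add_smul, sub_smul, Finset.sum_add_distrib,
        Finset.sum_sub_distrib, sum_pi_single_smul, hs, ht, one_smul]
      abel
    · simp [hml, hsm.symm, htm.symm, ha]
    · simp [hml.symm, hsl.symm, htl.symm, hb]

theorem LinearIndependent.isSupportedPair_of_sum_smul_eq_zero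
    (hind : LinearIndependent K ![v m, v l]) (hspan : ∀ k, v k ∈ span K {v m, v l})
    {c : ι → K} (hc : ∑ k, c k • v k = 0) (hcm : c m ≠ 0) (hcl : c l ≠ 0) :
    IsSupportedPair K v m l := by
  choose A B hAB using fun k => mem_span_pair.1 (hspan k)
  have hAm : A m = 1 := (hind.eq_of_pair (s' := 1) (t' := 0) ((hAB m).trans (by simp))).1
  have hBl : B l = 1 := (hind.eq_of_pair (s' := 0) (t' := 1) ((hAB l).trans (by simp))).2
  have hsums : ∑ k, c k * A k = 0 ∧ ∑ k, c k * B k = 0 := by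
    refine hind.eq_of_pair ?_
    calc (∑ k, c k * A k) • v m + (∑ k, c k * B k) • v l = ∑ k, c k • v k := by
          rw [Finset.sum_smul, Finset.sum_smul, ← Finset.sum_add_distrib]
          exact Finset.sum_congr rfl fun k _ => by rw [← hAB k, smul_add, mul_smul, mul_smul]
      _ = (0 : K) • v m + (0 : K) • v l := by simp [hc]
  obtain ⟨s, hsm, hs⟩ :=
    Finset.exists_ne_apply_ne_zero_of_sum_eq_zero hsums.1 (i := m) (by simpa [hAm])
  obtain ⟨t, htl, ht⟩ :=
    Finset.exists_ne_apply_ne_zero_of_sum_eq_zero hsums.2 (i := l) (by simpa [hBl])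
  by_cases hBs : B s = 0
  · by_cases hAt : A t = 0
    · refine .inr ⟨⟨s, hsm, A s, right_ne_zero_of_mul hs, ?_⟩,
        t, htl, B t, right_ne_zero_of_mul ht, ?_⟩
      · rw [← hAB s, hBs, zero_smul, add_zero]
      · rw [← hAB t, hAt, zero_smul, zero_add]
    · exact .inl ⟨t, A t, B t, hAt, right_ne_zero_of_mul ht, (hAB t).symm⟩
  · exact .inl ⟨s, A s, B s, right_ne_zero_of_mul hs, hBs, (hAB s).symm⟩

end SupportedPair

theorem stmt4_general (p : ℕ) (hp : p.Prime) (n : ℕ) (ρ : Fin n → (Fin 2 → ℤ)) :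
    (∃ m l : Fin n, m ≠ l ∧
      LinearIndependent (ZMod p) ![redMod p ρ m, redMod p ρ l] ∧
      Submodule.span (ZMod p) {redMod p ρ m, redMod p ρ l} =
        Submodule.span (ZMod p) (Set.range (redMod p ρ)) ∧
      ((∃ k : Fin n, ∃ a b : ZMod p, a ≠ 0 ∧ b ≠ 0 ∧
          redMod p ρ k = a • redMod p ρ m + b • redMod p ρ l) ∨
       ((∃ s : Fin n, s ≠ m ∧ ∃ a : ZMod p, a ≠ 0 ∧ redMod p ρ s = a • redMod p ρ m) ∧
        (∃ t : Fin n, t ≠ l ∧ ∃ b : ZMod p, b ≠ 0 ∧ redMod p ρ t = b • redMod p ρ l)))) ↔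
    (∃ cbar : Fin n → ZMod p, ∑ i, cbar i • redMod p ρ i = 0 ∧
      ∃ i j : Fin n, i ≠ j ∧ cbar i ≠ 0 ∧ cbar j ≠ 0 ∧
        redMod p ρ i 0 * redMod p ρ j 1 - redMod p ρ i 1 * redMod p ρ j 0 ≠ 0) := by
  have : Fact p.Prime := ⟨hp⟩
  constructor
  · rintro ⟨m, l, hml, hind, -, hsupp⟩
    obtain ⟨c, hc, hcm, hcl⟩ := hind.exists_sum_smul_eq_zero_of_isSupportedPair hml hsupp
    exact ⟨c, hc, m, l, hml, hcm, hcl, (linearIndependent_pair_iff_det_ne_zero _ _).1 hind⟩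
  · rintro ⟨c, hc, i, j, hij, hci, hcj, hdet⟩
    have hind := (linearIndependent_pair_iff_det_ne_zero _ _).2 hdet
    have hspan := hind.span_pair_eq_top
    refine ⟨i, j, hij, hind, ?_,
      hind.isSupportedPair_of_sum_smul_eq_zero (fun _ => hspan ▸ mem_top) hc hci hcj⟩
    rw [hspan, eq_comm, eq_top_iff, ← hspan]
    exact span_mono (Set.pair_subset ⟨i, rfl⟩ ⟨j, rfl⟩)

/-- Equivalence established in the proof of Proposition 4.1: the hypothesis of
Proposition 4.1 (condition (A), on the reductions mod `p` of the primitive rays) is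
equivalent to the hypothesis of Lemma 4.2 (condition (B), a mod-`p` relation with two
nonzero coefficients at indices with nonzero mod-`p` determinant). -/
theorem stmt4 (p : ℕ) (hp : p.Prime) (n : ℕ) (ρ : Fin n → (Fin 2 → ℤ))
    (hprim : ∀ i, Int.gcd (ρ i 0) (ρ i 1) = 1) :
    (∃ m l : Fin n, m ≠ l ∧
      LinearIndependent (ZMod p) ![redMod p ρ m, redMod p ρ l] ∧
      Submodule.span (ZMod p) {redMod p ρ m, redMod p ρ l} =
        Submodule.span (ZMod p) (Set.range (redMod p ρ)) ∧
      ((∃ k : Fin n, ∃ a b : ZMod p, a ≠ 0 ∧ b ≠ 0 ∧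
          redMod p ρ k = a • redMod p ρ m + b • redMod p ρ l) ∨
       ((∃ s : Fin n, s ≠ m ∧ ∃ a : ZMod p, a ≠ 0 ∧ redMod p ρ s = a • redMod p ρ m) ∧
        (∃ t : Fin n, t ≠ l ∧ ∃ b : ZMod p, b ≠ 0 ∧ redMod p ρ t = b • redMod p ρ l)))) ↔
    (∃ cbar : Fin n → ZMod p, ∑ i, cbar i • redMod p ρ i = 0 ∧
      ∃ i j : Fin n, i ≠ j ∧ cbar i ≠ 0 ∧ cbar j ≠ 0 ∧
        redMod p ρ i 0 * redMod p ρ j 1 - redMod p ρ i 1 * redMod p ρ j 0 ≠ 0) :=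
  stmt4_general p hp n ρ
end

section
/- Let p be a prime and let ρ_1, …, ρ_n ∈ ℤ² be primitive vectors (the two coordinates of each ρ_i have greatest common divisor 1) admitting positive integers b_1, …, b_n with b_1ρ_1 + … + b_nρ_n = 0. Denote by ρ̄_i the reduction of ρ_i modulo p. Suppose there exist indices m ≠ l such that {ρ̄_m, ρ̄_l} is an 𝔽_p-basis of the 𝔽_p-span of {ρ̄_1, …, ρ̄_n}, and moreover either (b1) there exists an index k with ρ̄_k = a·ρ̄_m + b·ρ̄_l for some a, b ∈ ℤ/pℤ both nonzero, or (b2) there exists an index s ≠ m with ρ̄_s a nonzero scalar multiple of ρ̄_m and an index t ≠ l with ρ̄_t a nonzero scalar multiple of ρ̄_l. Then there exist positive integers c_1, …, c_n such that c_1ρ_1 + … + c_nρ_n = 0, the subgroup M of ℤ² generated by c_1ρ_1, …, c_nρ_n has finite index in ℤ², and ℤ²/M has no p-torsion, i.e. for every x ∈ ℤ², if p·x ∈ M then x ∈ M. -/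
/-!
Let `d = det(ρ_m, ρ_l)`, a unit mod `p`. In case (b1) put `w = ρ_k`, in case (b2) `w = ρ_s + ρ_t`:
an integral combination of rays other than `ρ_m, ρ_l` whose reduction is `a ρ̄_m + b ρ̄_l` with
`a, b ≠ 0`. Cramer's rule `d w = det(w, ρ_l) ρ_m + det(ρ_m, w) ρ_l` is an integral relation whose
coefficients at `m` and `l` are `≡ -a d` and `≡ -b d` mod `p`, and adding a large multiple of
`p · b` makes it positive without changing it mod `p`. For the resulting `c`, the vectors
`c_m ρ_m, c_l ρ_l` have determinant `D ≡ a b d³ ≢ 0` mod `p`. A subgroup of `ℤ²` containing two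
vectors of determinant `D` contains `D ℤ²`; it therefore has finite index, and since `D` is prime
to `p` the quotient has no `p`-torsion.
-/

section Lattice

variable {N : Type*} [AddCommGroup N] (M : Submodule ℤ N) {D : ℤ}

theorem finiteIndex_of_forall_smul_mem [Module.Finite ℤ N] (hD : D ≠ 0)
    (h : ∀ x, D • x ∈ M) : M.toAddSubgroup.FiniteIndex := by
  have hfin : Finite (N ⧸ M) := Module.finite_of_fg_torsion _ fun q => by
    induction q using Submodule.Quotient.induction_on with
    | H x => exact ⟨⟨D, mem_nonZeroDivisors_of_ne_zero hD⟩,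
        (Submodule.Quotient.mk_smul M D x).symm.trans ((Submodule.Quotient.mk_eq_zero M).2 (h x))⟩
  exact @AddSubgroup.finiteIndex_of_finite_quotient _ _ _ hfin

theorem mem_of_smul_mem_of_isCoprime {q : ℤ} (hqD : IsCoprime q D) (h : ∀ x, D • x ∈ M)
    {x : N} (hx : q • x ∈ M) : x ∈ M := by
  obtain ⟨s, t, hst⟩ := hqD
  have hx' : x = s • q • x + t • D • x := by
    rw [smul_smul, smul_smul, ← add_smul, hst, one_smul]
  rw [hx']
  exact M.add_mem (M.smul_mem s hx) (M.smul_mem t (h x))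

end Lattice

section Det2

variable {R : Type*} [CommRing R]

def det2 (u v : Fin 2 → R) : R := u 0 * v 1 - u 1 * v 0

theorem intCast_det2 (u v : Fin 2 → ℤ) :
    ((det2 u v : ℤ) : R) = det2 (Int.cast ∘ u) (Int.cast ∘ v) := by
  simp [det2]

section Identities

variable (u v w : Fin 2 → R) (s t : R)

theorem det2_smul_eq_add : det2 u v • w = det2 w v • u + det2 u w • v := by
  funext i
  fin_cases i <;>
    simp only [det2, Pi.add_apply, Pi.smul_apply, smul_eq_mul, Fin.isValue, Fin.zero_eta,
      Fin.mk_one] <;> ring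

@[simp] theorem det2_self : det2 u u = 0 := by
  simp only [det2]; ring

@[simp] theorem det2_add_left : det2 (u + w) v = det2 u v + det2 w v := by
  simp only [det2, Pi.add_apply]; ring

@[simp] theorem det2_add_right : det2 u (v + w) = det2 u v + det2 u w := by
  simp only [det2, Pi.add_apply]; ring

@[simp] theorem det2_smul_left : det2 (s • u) v = s * det2 u v := by
  simp only [det2, Pi.smul_apply, smul_eq_mul]; ring

@[simp] theorem det2_smul_right : det2 u (t • v) = t * det2 u v := by
  simp only [det2, Pi.smul_apply, smul_eq_mul]; ring

end Identities

theorem det2_smul_mem {M : Submodule R (Fin 2 → R)} {u v : Fin 2 → R} (hu : u ∈ M) (hv : v ∈ M)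
    (w : Fin 2 → R) : det2 u v • w ∈ M := by
  rw [det2_smul_eq_add]
  exact M.add_mem (M.smul_mem _ hu) (M.smul_mem _ hv)

theorem det2_ne_zero_of_linearIndependent {K : Type*} [Field K] {u v : Fin 2 → K}
    (h : LinearIndependent K ![u, v]) : det2 u v ≠ 0 := by
  have := (Matrix.linearIndependent_rows_iff_isUnit (A := Matrix.of ![u, v])).1 h
  rw [Matrix.isUnit_iff_isUnit_det, Matrix.det_fin_two, isUnit_iff_ne_zero] at this
  simpa [det2] using this

end Det2

theorem finiteIndex_and_pTorsionFree_of_det2 {p : ℕ} (hp : p.Prime)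
    {M : Submodule ℤ (Fin 2 → ℤ)} {u v : Fin 2 → ℤ} (hu : u ∈ M) (hv : v ∈ M)
    (hd : ((det2 u v : ℤ) : ZMod p) ≠ 0) :
    M.toAddSubgroup.FiniteIndex ∧ ∀ x : Fin 2 → ℤ, (p : ℤ) • x ∈ M → x ∈ M := by
  have hmem : ∀ x, det2 u v • x ∈ M := det2_smul_mem hu hv
  have hpd : ¬ (p : ℤ) ∣ det2 u v := mt (ZMod.intCast_zmod_eq_zero_iff_dvd _ _).2 hd
  refine ⟨finiteIndex_of_forall_smul_mem M (by rintro h; simp [h] at hpd) hmem,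
    fun x => mem_of_smul_mem_of_isCoprime M ?_ hmem⟩
  exact (Prime.coprime_iff_not_dvd (Nat.prime_iff_prime_int.1 hp)).2 hpd

theorem exists_pos_relation_modEq {ι V : Type*} [Fintype ι] [AddCommGroup V] {ρ : ι → V}
    {b r : ι → ℤ} (hb : ∀ i, 0 < b i) (hbρ : ∑ i, b i • ρ i = 0) (hrρ : ∑ i, r i • ρ i = 0)
    {p : ℤ} (hp : 0 < p) :
    ∃ c : ι → ℤ, (∀ i, 0 < c i) ∧ ∑ i, c i • ρ i = 0 ∧ ∀ i, c i ≡ r i [ZMOD p] := by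
  set N := ∑ i, |r i| + 1
  refine ⟨r + (p * N) • b, fun i => ?_, ?_, fun i => ?_⟩
  · have hri : |r i| < N :=
      Int.lt_add_one_of_le (Finset.single_le_sum (fun j _ => abs_nonneg (r j)) (Finset.mem_univ i))
    have hN : N ≤ p * N * b i :=
      calc N = 1 * N * 1 := by ring
        _ ≤ p * N * b i := by
          have : 0 ≤ N := by positivity
          have := hb i
          gcongr <;> omega
    simp only [Pi.add_apply, Pi.smul_apply, smul_eq_mul]
    linarith [neg_abs_le (r i)]
  · simp [add_smul, Finset.sum_add_distrib, mul_smul, ← Finset.smul_sum, hbρ, hrρ]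
  · simp [Int.ModEq, mul_assoc]

theorem exists_relation_det2 {ι R : Type*} [Fintype ι] [DecidableEq ι] [CommRing R]
    (ρ : ι → Fin 2 → R) (g : ι → R) {m l : ι} (hml : m ≠ l) (hgm : g m = 0) (hgl : g l = 0) :
    ∃ r : ι → R, ∑ i, r i • ρ i = 0 ∧ r m = -det2 (∑ i, g i • ρ i) (ρ l) ∧
      r l = -det2 (ρ m) (∑ i, g i • ρ i) := by
  set w := ∑ i, g i • ρ i
  refine ⟨det2 (ρ m) (ρ l) • g - Pi.single m (det2 w (ρ l)) - Pi.single l (det2 (ρ m) w),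
    ?_, ?_, ?_⟩
  · simp only [Pi.sub_apply, Pi.smul_apply, smul_eq_mul, Pi.single_apply, sub_smul, mul_smul,
      ite_smul, zero_smul, Finset.sum_sub_distrib, ← Finset.smul_sum, Finset.sum_ite_eq',
      Finset.mem_univ, if_true]
    rw [det2_smul_eq_add (ρ m) (ρ l) w]
    abel
  · simp [hgm, hml]
  · simp [hgl, hml.symm]

theorem exists_combination_det2_ne_zero {ι K : Type*} [Fintype ι] [DecidableEq ι] [Field K]
    {x : ι → Fin 2 → K} {m l : ι} (hd : det2 (x m) (x l) ≠ 0)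
    (h : (∃ k, ∃ a b : K, a ≠ 0 ∧ b ≠ 0 ∧ x k = a • x m + b • x l) ∨
      ((∃ s, s ≠ m ∧ ∃ a : K, a ≠ 0 ∧ x s = a • x m) ∧
        (∃ t, t ≠ l ∧ ∃ b : K, b ≠ 0 ∧ x t = b • x l))) :
    ∃ g : ι → ℤ, g m = 0 ∧ g l = 0 ∧
      det2 (∑ i, g i • x i) (x l) ≠ 0 ∧ det2 (x m) (∑ i, g i • x i) ≠ 0 := by
  rcases h with ⟨k, a, b, ha, hb, hk⟩ | ⟨⟨s, hsm, a, ha, hs⟩, t, htl, b, hb, ht⟩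
  · have hkl : det2 (x k) (x l) ≠ 0 := by simp [hk, ha, hd]
    have hmk : det2 (x m) (x k) ≠ 0 := by simp [hk, hb, hd]
    have hsum : ∑ i, (Pi.single k 1 : ι → ℤ) i • x i = x k := by simp [Pi.single_apply]
    refine ⟨Pi.single k 1, Pi.single_eq_of_ne ?_ _, Pi.single_eq_of_ne ?_ _, hsum ▸ hkl,
      hsum ▸ hmk⟩
    · rintro rfl; simp at hmk
    · rintro rfl; simp at hkl
  · have hsl : det2 (x s) (x l) ≠ 0 := by simp [hs, ha, hd]
    have hmt : det2 (x m) (x t) ≠ 0 := by simp [ht, hb, hd]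
    have hmt' : m ≠ t := by rintro rfl; simp at hmt
    have hls : l ≠ s := by rintro rfl; simp at hsl
    have hsum : ∑ i, (Pi.single s 1 + Pi.single t 1 : ι → ℤ) i • x i = x s + x t := by
      simp [add_smul, Finset.sum_add_distrib, Pi.single_apply]
    refine ⟨Pi.single s 1 + Pi.single t 1, by simp [hsm.symm, hmt'], by simp [hls, htl.symm],
      ?_, ?_⟩
    · rw [hsum]; simpa [hs, ht, hd] using ha
    · rw [hsum]; simpa [hs, ht, hd] using hb

theorem stmt5_general (p : ℕ) (hp : p.Prime) (n : ℕ) (ρ : Fin n → (Fin 2 → ℤ))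
    (hb : ∃ b : Fin n → ℤ, (∀ i, 0 < b i) ∧ ∑ i, b i • ρ i = 0)
    (hA : ∃ m l : Fin n, m ≠ l ∧
      LinearIndependent (ZMod p) ![redMod p ρ m, redMod p ρ l] ∧
      Submodule.span (ZMod p) {redMod p ρ m, redMod p ρ l} =
        Submodule.span (ZMod p) (Set.range (redMod p ρ)) ∧
      ((∃ k : Fin n, ∃ a b : ZMod p, a ≠ 0 ∧ b ≠ 0 ∧
          redMod p ρ k = a • redMod p ρ m + b • redMod p ρ l) ∨
       ((∃ s : Fin n, s ≠ m ∧ ∃ a : ZMod p, a ≠ 0 ∧ redMod p ρ s = a • redMod p ρ m) ∧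
        (∃ t : Fin n, t ≠ l ∧ ∃ b : ZMod p, b ≠ 0 ∧ redMod p ρ t = b • redMod p ρ l)))) :
    ∃ c : Fin n → ℤ, (∀ k, 0 < c k) ∧ ∑ k, c k • ρ k = 0 ∧
      (Submodule.span ℤ (Set.range fun k => c k • ρ k)).toAddSubgroup.FiniteIndex ∧
      ∀ x : Fin 2 → ℤ, (p : ℤ) • x ∈ Submodule.span ℤ (Set.range fun k => c k • ρ k) →
        x ∈ Submodule.span ℤ (Set.range fun k => c k • ρ k) := by
  have : Fact p.Prime := ⟨hp⟩
  obtain ⟨b, hbpos, hbρ⟩ := hb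
  obtain ⟨m, l, hml, hind, -, hcase⟩ := hA
  have hd := det2_ne_zero_of_linearIndependent hind
  obtain ⟨g, hgm, hgl, hwl, hmw⟩ := exists_combination_det2_ne_zero hd hcase
  obtain ⟨r, hrρ, hrm, hrl⟩ := exists_relation_det2 ρ g hml hgm hgl
  obtain ⟨c, hcpos, hcρ, hcr⟩ :=
    exists_pos_relation_modEq hbpos hbρ hrρ (p := p) (by exact_mod_cast hp.pos)
  have hw : Int.cast ∘ ∑ i, g i • ρ i = ∑ i, g i • redMod p ρ i := by
    ext j; simp [redMod, Finset.sum_apply]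
  have hc : ∀ i, (c i : ZMod p) = r i := fun i => (ZMod.intCast_eq_intCast_iff _ _ _).2 (hcr i)
  have hdet : ((det2 (c m • ρ m) (c l • ρ l) : ℤ) : ZMod p) ≠ 0 := by
    rw [det2_smul_left, det2_smul_right]
    simp only [Int.cast_mul, hc, hrm, hrl, Int.cast_neg, intCast_det2, hw]
    exact mul_ne_zero (neg_ne_zero.2 hwl) (mul_ne_zero (neg_ne_zero.2 hmw) hd)
  exact ⟨c, hcpos, hcρ, finiteIndex_and_pTorsionFree_of_det2 hp
    (Submodule.subset_span ⟨m, rfl⟩) (Submodule.subset_span ⟨l, rfl⟩) hdet⟩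

/-- Combinatorial content of Proposition 4.1: under the hypothesis on the reductions
mod `p` of the primitive rays, there is a positive integral relation whose terms generate
a finite-index sublattice of `ℤ²` with `p`-torsion-free quotient (the Chen–Lian–Tseng
criterion for separable Campana rational connectedness). -/
theorem stmt5 (p : ℕ) (hp : p.Prime) (n : ℕ) (ρ : Fin n → (Fin 2 → ℤ))
    (hprim : ∀ i, Int.gcd (ρ i 0) (ρ i 1) = 1)
    (hb : ∃ b : Fin n → ℤ, (∀ i, 0 < b i) ∧ ∑ i, b i • ρ i = 0)
    (hA : ∃ m l : Fin n, m ≠ l ∧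
      LinearIndependent (ZMod p) ![redMod p ρ m, redMod p ρ l] ∧
      Submodule.span (ZMod p) {redMod p ρ m, redMod p ρ l} =
        Submodule.span (ZMod p) (Set.range (redMod p ρ)) ∧
      ((∃ k : Fin n, ∃ a b : ZMod p, a ≠ 0 ∧ b ≠ 0 ∧
          redMod p ρ k = a • redMod p ρ m + b • redMod p ρ l) ∨
       ((∃ s : Fin n, s ≠ m ∧ ∃ a : ZMod p, a ≠ 0 ∧ redMod p ρ s = a • redMod p ρ m) ∧
        (∃ t : Fin n, t ≠ l ∧ ∃ b : ZMod p, b ≠ 0 ∧ redMod p ρ t = b • redMod p ρ l)))) :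
    ∃ c : Fin n → ℤ, (∀ k, 0 < c k) ∧ ∑ k, c k • ρ k = 0 ∧
      (Submodule.span ℤ (Set.range fun k => c k • ρ k)).toAddSubgroup.FiniteIndex ∧
      ∀ x : Fin 2 → ℤ, (p : ℤ) • x ∈ Submodule.span ℤ (Set.range fun k => c k • ρ k) →
        x ∈ Submodule.span ℤ (Set.range fun k => c k • ρ k) :=
  stmt5_general p hp n ρ hb hA
end

section
/- Let n ≥ 1 and let q_0, q_1, …, q_n be positive integers forming a well-formed weight, meaning that for every index j the greatest common divisor of the set {q_i : i ≠ j} equals 1. In ℚ^n, let v_1, …, v_n be the standard basis vectors, let v_0 = −(v_1 + … + v_n), and set e_i = (1/q_i)·v_i for i = 0, …, n. Suppose k_0, k_1, …, k_n are positive integers with k_0·e_0 + k_1·e_1 + … + k_n·e_n = 0. Then there exists a positive integer m such that k_i = m·q_i for every i = 0, …, n; equivalently, k_i·e_i = m·v_i for every i. -/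
/-!
Reading the balancing condition coordinatewise, it says that `k i / q i` is the same rational
number `r` for every `i`. Writing `r = a / b` in lowest terms, `b` divides every `q i`, hence
divides the gcd of the weights with index `≠ 0`, which is `1` by well-formedness; so `r = a` is a
positive integer and `k i = a * q i`.
-/

theorem Fin.sum_smul_apply_eq_sub {R : Type*} [Ring R] {n : ℕ} (v : Fin (n + 1) → Fin n → R)
    (hv : ∀ j : Fin n, v j.succ = Pi.single j 1) (hv0 : v 0 = -∑ j : Fin n, Pi.single j 1)
    (c : Fin (n + 1) → R) (j : Fin n) :
    (∑ i, c i • v i) j = c j.succ - c 0 := by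
  simp [Fin.sum_univ_succ, hv, hv0, Pi.single_apply, sub_eq_neg_add]

theorem Nat.exists_eq_mul_of_mul_eq_mul_of_gcd_eq_one {ι : Type*} {s : Finset ι}
    {k q : ι → ℕ} {i₀ : ι} (hq₀ : 0 < q i₀) (hprop : ∀ i, k i * q i₀ = k i₀ * q i)
    (hgcd : s.gcd q = 1) : ∃ m, ∀ i, k i = m * q i := by
  set d := Nat.gcd (k i₀) (q i₀)
  have hd : 0 < d := Nat.gcd_pos_of_pos_right _ hq₀
  have hcop := Nat.coprime_div_gcd_div_gcd hd
  set a := k i₀ / d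
  set b := q i₀ / d
  have ha : k i₀ = d * a := (Nat.mul_div_cancel' (Nat.gcd_dvd_left _ _)).symm
  have hb : q i₀ = d * b := (Nat.mul_div_cancel' (Nat.gcd_dvd_right _ _)).symm
  have hlowest : ∀ i, k i * b = a * q i := fun i =>
    Nat.eq_of_mul_eq_mul_left hd <| by
      calc d * (k i * b) = k i * q i₀ := by rw [hb]; ring
        _ = k i₀ * q i := hprop i
        _ = d * (a * q i) := by rw [ha, mul_assoc]
  have hb_dvd : ∀ i, b ∣ q i := fun i =>
    hcop.symm.dvd_of_dvd_mul_left ⟨k i, by rw [← hlowest i, mul_comm]⟩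
  have hb1 : b = 1 := Nat.dvd_one.mp (hgcd ▸ Finset.dvd_gcd fun i _ => hb_dvd i)
  exact ⟨a, fun i => by simpa [hb1] using hlowest i⟩

theorem stmt8_general (n : ℕ) (q : Fin (n + 1) → ℕ) (hq : ∀ i, 0 < q i)
    (hwf : ∀ j : Fin (n + 1), (Finset.univ.erase j).gcd q = 1)
    (v : Fin (n + 1) → (Fin n → ℚ))
    (hv : ∀ j : Fin n, v j.succ = Pi.single j 1)
    (hv0 : v 0 = -∑ j : Fin n, Pi.single j 1)
    (e : Fin (n + 1) → (Fin n → ℚ)) (he : ∀ i, e i = (q i : ℚ)⁻¹ • v i)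
    (k : Fin (n + 1) → ℕ) (hk : ∀ i, 0 < k i)
    (hbal : ∑ i, (k i : ℚ) • e i = 0) :
    ∃ m : ℕ, 0 < m ∧ ∀ i, k i = m * q i := by
  set r : Fin (n + 1) → ℚ := fun i => k i / q i
  have hbal' : ∑ i, r i • v i = 0 := by simpa [r, he, smul_smul, div_eq_mul_inv] using hbal
  have hr : ∀ i, r i = r 0 := Fin.cases rfl fun j => by
    have := Fin.sum_smul_apply_eq_sub v hv hv0 r j
    rwa [hbal', Pi.zero_apply, eq_comm, sub_eq_zero] at this
  have hprop : ∀ i, k i * q 0 = k 0 * q i := fun i => by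
    have hqi : (q i : ℚ) ≠ 0 := by exact_mod_cast (hq i).ne'
    have hq0 : (q 0 : ℚ) ≠ 0 := by exact_mod_cast (hq 0).ne'
    exact_mod_cast (div_eq_div_iff hqi hq0).mp (hr i)
  obtain ⟨m, hm⟩ := Nat.exists_eq_mul_of_mul_eq_mul_of_gcd_eq_one (hq 0) hprop (hwf 0)
  refine ⟨m, Nat.pos_of_ne_zero fun h0 => ?_, hm⟩
  exact (hk 0).ne' (by rw [hm 0, h0, zero_mul])

/-- Rigidity statement at the heart of Theorem 5.2: for a well-formed weight
`(q 0, …, q n)`, with `v (j+1)` the standard basis of `ℚ^n`, `v 0 = -(v 1 + ⋯ + v n)`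
and `e i = v i / q i`, any positive integral balanced collection
`∑ k i • e i = 0` satisfies `k i = m * q i` for a single positive integer `m`. -/
theorem stmt8 (n : ℕ) (hn : 1 ≤ n) (q : Fin (n + 1) → ℕ) (hq : ∀ i, 0 < q i)
    (hwf : ∀ j : Fin (n + 1), (Finset.univ.erase j).gcd q = 1)
    (v : Fin (n + 1) → (Fin n → ℚ))
    (hv : ∀ j : Fin n, v j.succ = Pi.single j 1)
    (hv0 : v 0 = -∑ j : Fin n, Pi.single j 1)
    (e : Fin (n + 1) → (Fin n → ℚ)) (he : ∀ i, e i = (q i : ℚ)⁻¹ • v i)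
    (k : Fin (n + 1) → ℕ) (hk : ∀ i, 0 < k i)
    (hbal : ∑ i, (k i : ℚ) • e i = 0) :
    ∃ m : ℕ, 0 < m ∧ ∀ i, k i = m * q i :=
  stmt8_general n q hq hwf v hv hv0 e he k hk hbal
end

section
/- Let n ≥ 1 and let q_0, q_1, …, q_n be positive integers forming a well-formed weight, meaning that for every index j the greatest common divisor of the set {q_i : i ≠ j} equals 1. In ℚ^n, let v_1, …, v_n be the standard basis vectors, let v_0 = −(v_1 + … + v_n), and set e_i = (1/q_i)·v_i for i = 0, …, n. Let N be the subgroup of ℚ^n generated by e_0, …, e_n, and for a positive integer m let L be the subgroup of N generated by m·v_0, m·v_1, …, m·v_n. Then L has finite index in N, each weight q_i divides the index [N : L], and consequently, if a prime p divides some q_j, then the quotient group N/L contains an element of order p. -/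
/-!
The class of `e i` in `N ⧸ L` has order exactly `m * q i`: `(m * q i) • e i = m • v i` lies in
`L`, while every vector of `L` has all its coordinates in `mℤ` and `v i` has a coordinate `±1`,
so `k • e i ∈ L` forces `m * q i ∣ k`. Orders of elements divide the index, which gives
`q i ∣ [N : L]`, and if `p ∣ q j` then a multiple of the class of `e j` has order `p`. The index
is finite because `N` is finitely generated and `(m * ∏ q i) • N ≤ L`.
-/

open AddSubgroup

section QuotientOrder

variable {G : Type*} [AddCommGroup G] {H K : AddSubgroup G}

theorem AddSubgroup.relIndex_closure_ne_zero_of_nsmul_mem {s : Set G} [Finite s] {k : ℕ}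
    (hk : k ≠ 0) (h : ∀ x ∈ s, k • x ∈ H) : H.relIndex (closure s) ≠ 0 := by
  have hmem : ∀ x ∈ closure s, k • x ∈ H := fun x hx => by
    induction hx using AddSubgroup.closure_induction with
    | mem x hx => exact h x hx
    | zero => simp
    | add x y _ _ hx hy => simpa [nsmul_add] using H.add_mem hx hy
    | neg x _ hx => simpa using H.neg_mem hx
  have htorsion : IsAddTorsion (closure s ⧸ H.addSubgroupOf (closure s)) := by
    refine fun x => QuotientAddGroup.induction_on x fun y => ?_
    refine isOfFinAddOrder_iff_nsmul_eq_zero.mpr ⟨k, Nat.pos_of_ne_zero hk, ?_⟩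
    rw [← QuotientAddGroup.mk_nsmul, QuotientAddGroup.eq_zero_iff, mem_addSubgroupOf]
    exact hmem y y.2
  have := AddCommGroup.finite_of_fg_isAddTorsion _ htorsion
  exact index_ne_zero_of_finite

theorem QuotientAddGroup.nsmul_mk_addSubgroupOf_eq_zero_iff {x : G} (hx : x ∈ K) (k : ℕ) :
    k • (mk ⟨x, hx⟩ : K ⧸ H.addSubgroupOf K) = 0 ↔ k • x ∈ H := by
  rw [← QuotientAddGroup.mk_nsmul, QuotientAddGroup.eq_zero_iff, mem_addSubgroupOf]
  rfl

theorem QuotientAddGroup.addOrderOf_mk_addSubgroupOf {x : G} (hx : x ∈ K) {d : ℕ}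
    (h : ∀ k : ℕ, k • x ∈ H ↔ d ∣ k) :
    addOrderOf (mk ⟨x, hx⟩ : K ⧸ H.addSubgroupOf K) = d :=
  Nat.dvd_right_iff_eq.mp fun k => by
    rw [addOrderOf_dvd_iff_nsmul_eq_zero, nsmul_mk_addSubgroupOf_eq_zero_iff, h]

end QuotientOrder

section RationalLattice

variable {ι κ : Type*}

theorem mul_dvd_of_div_mem_zmultiples {m q k : ℕ} (hq : q ≠ 0)
    (h : (k : ℚ) / q ∈ zmultiples (m : ℚ)) : m * q ∣ k := by
  obtain ⟨c, hc⟩ := h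
  have hcast : ((m * q : ℕ) : ℤ) * c = k := by
    dsimp only at hc
    rw [zsmul_eq_mul, eq_div_iff (Nat.cast_ne_zero.mpr hq)] at hc
    have : ((m * q : ℕ) : ℚ) * c = k := by rw [← hc]; push_cast; ring
    exact_mod_cast this
  exact Int.natCast_dvd_natCast.mp ⟨c, hcast.symm⟩

theorem closure_range_smul_le_pi_zmultiples (v : ι → κ → ℚ)
    (hv : ∀ i j, ∃ z : ℤ, v i j = z) (c : ℚ) :
    AddSubgroup.closure (Set.range fun i => c • v i) ≤
      AddSubgroup.pi Set.univ fun _ => zmultiples c := by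
  rw [closure_le]
  rintro _ ⟨i, rfl⟩ j -
  obtain ⟨z, hz⟩ := hv i j
  exact ⟨z, by simp [hz, mul_comm]⟩

theorem mul_dvd_of_nsmul_inv_smul_mem_pi_zmultiples {w : κ → ℚ} {j : κ} (hw : |w j| = 1)
    {m q k : ℕ} (hq : q ≠ 0)
    (h : k • ((q : ℚ)⁻¹ • w) ∈ AddSubgroup.pi Set.univ fun _ => zmultiples (m : ℚ)) :
    m * q ∣ k := by
  have hj : (k : ℚ) / q * w j ∈ zmultiples (m : ℚ) := by
    simpa [div_eq_mul_inv, mul_assoc] using h j trivial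
  refine mul_dvd_of_div_mem_zmultiples hq ?_
  rcases (abs_eq zero_le_one).mp hw with h1 | h1
  · simpa [h1] using hj
  · simpa [h1] using neg_mem hj

theorem nsmul_inv_smul_mem_closure_range_smul_iff (v : ι → κ → ℚ)
    (hv : ∀ i j, ∃ z : ℤ, v i j = z) {i : ι} (hi : ∃ j, |v i j| = 1) {m q : ℕ}
    (hq : q ≠ 0) (k : ℕ) : k • ((q : ℚ)⁻¹ • v i) ∈
      AddSubgroup.closure (Set.range fun i => (m : ℚ) • v i) ↔ m * q ∣ k := by
  constructor
  · obtain ⟨j, hj⟩ := hi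
    exact fun h => mul_dvd_of_nsmul_inv_smul_mem_pi_zmultiples hj hq
      (closure_range_smul_le_pi_zmultiples v hv _ h)
  · rintro ⟨d, rfl⟩
    have : (m * q * d) • ((q : ℚ)⁻¹ • v i) = d • ((m : ℚ) • v i) := by
      rw [← Nat.cast_smul_eq_nsmul ℚ, ← Nat.cast_smul_eq_nsmul ℚ, smul_smul, smul_smul]
      congr 1
      field_simp
      push_cast
      ring
    exact this ▸ nsmul_mem (AddSubgroup.subset_closure (Set.mem_range_self i)) d

end RationalLattice

section SimplexVertices

variable {n : ℕ} {v : Fin (n + 1) → Fin n → ℚ}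

theorem exists_int_eq_apply_of_simplex (hv : ∀ j : Fin n, v j.succ = Pi.single j 1)
    (hv0 : v 0 = -∑ j : Fin n, Pi.single j 1) (i : Fin (n + 1)) (j : Fin n) :
    ∃ z : ℤ, v i j = z := by
  induction i using Fin.cases with
  | zero => exact ⟨-1, by simp [hv0, Finset.sum_apply, Pi.single_apply]⟩
  | succ i => exact ⟨if j = i then 1 else 0, by simp [hv, Pi.single_apply]⟩

theorem exists_abs_apply_eq_one_of_simplex (hn : 1 ≤ n)
    (hv : ∀ j : Fin n, v j.succ = Pi.single j 1)
    (hv0 : v 0 = -∑ j : Fin n, Pi.single j 1) (i : Fin (n + 1)) : ∃ j, |v i j| = 1 := by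
  induction i using Fin.cases with
  | zero => exact ⟨⟨0, hn⟩, by simp [hv0, Finset.sum_apply, Pi.single_apply]⟩
  | succ i => exact ⟨i, by simp [hv]⟩

end SimplexVertices

theorem stmt9_general (n : ℕ) (hn : 1 ≤ n) (q : Fin (n + 1) → ℕ) (hq : ∀ i, 0 < q i)
    (v : Fin (n + 1) → (Fin n → ℚ))
    (hv : ∀ j : Fin n, v j.succ = Pi.single j 1)
    (hv0 : v 0 = -∑ j : Fin n, Pi.single j 1)
    (e : Fin (n + 1) → (Fin n → ℚ)) (he : ∀ i, e i = (q i : ℚ)⁻¹ • v i)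
    (m : ℕ) (hm : 0 < m)
    (N : AddSubgroup (Fin n → ℚ)) (hN : N = AddSubgroup.closure (Set.range e))
    (L : AddSubgroup (Fin n → ℚ))
    (hL : L = AddSubgroup.closure (Set.range fun i => (m : ℚ) • v i)) :
    L.relIndex N ≠ 0 ∧ (∀ i, q i ∣ L.relIndex N) ∧
      ∀ p : ℕ, p.Prime → (∃ j, p ∣ q j) →
        ∃ x : N ⧸ L.addSubgroupOf N, addOrderOf x = p := by
  have hnsmul_mem_iff (i : Fin (n + 1)) (k : ℕ) : k • e i ∈ L ↔ m * q i ∣ k := by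
    rw [hL, he]
    exact nsmul_inv_smul_mem_closure_range_smul_iff v (exists_int_eq_apply_of_simplex hv hv0)
      (exists_abs_apply_eq_one_of_simplex hn hv hv0 i) (hq i).ne' k
  have he_mem (i : Fin (n + 1)) : e i ∈ N := hN ▸ AddSubgroup.subset_closure ⟨i, rfl⟩
  have horder (i : Fin (n + 1)) :
      addOrderOf (QuotientAddGroup.mk ⟨e i, he_mem i⟩ : N ⧸ L.addSubgroupOf N) = m * q i :=
    QuotientAddGroup.addOrderOf_mk_addSubgroupOf _ (hnsmul_mem_iff i)
  have hdvd (i : Fin (n + 1)) : q i ∣ L.relIndex N :=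
    calc q i ∣ m * q i := dvd_mul_left _ _
      _ = addOrderOf _ := (horder i).symm
      _ ∣ L.relIndex N := _root_.addOrderOf_dvd_natCard _
  refine ⟨?_, hdvd, fun p _ ⟨j, hpj⟩ => ?_⟩
  · subst hN
    refine relIndex_closure_ne_zero_of_nsmul_mem (k := m * ∏ i, q i)
      (Nat.mul_pos hm (Finset.prod_pos fun i _ => hq i)).ne' ?_
    rintro _ ⟨i, rfl⟩
    exact (hnsmul_mem_iff i _).mpr
      (mul_dvd_mul_left m (Finset.dvd_prod_of_mem q (Finset.mem_univ i)))
  · refine ⟨_, addOrderOf_nsmul_addOrderOf_sub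
      (x := (QuotientAddGroup.mk ⟨e j, he_mem j⟩ : N ⧸ L.addSubgroupOf N)) ?_ ?_⟩
      <;> rw [horder j]
    · exact (Nat.mul_pos hm (hq j)).ne'
    · exact hpj.trans (dvd_mul_left _ _)

/-- Content of Remark 4.9: with `N` the lattice generated by the `e i = v i / q i` and
`L` the sublattice generated by the balanced contact orders `m • v i`, `L` has finite
index in `N`, each weight `q i` divides the index `[N : L]`, and if a prime `p` divides
some weight then the quotient `N ⧸ L` contains an element of order `p`. -/
theorem stmt9 (n : ℕ) (hn : 1 ≤ n) (q : Fin (n + 1) → ℕ) (hq : ∀ i, 0 < q i)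
    (hwf : ∀ j : Fin (n + 1), (Finset.univ.erase j).gcd q = 1)
    (v : Fin (n + 1) → (Fin n → ℚ))
    (hv : ∀ j : Fin n, v j.succ = Pi.single j 1)
    (hv0 : v 0 = -∑ j : Fin n, Pi.single j 1)
    (e : Fin (n + 1) → (Fin n → ℚ)) (he : ∀ i, e i = (q i : ℚ)⁻¹ • v i)
    (m : ℕ) (hm : 0 < m)
    (N : AddSubgroup (Fin n → ℚ)) (hN : N = AddSubgroup.closure (Set.range e))
    (L : AddSubgroup (Fin n → ℚ))
    (hL : L = AddSubgroup.closure (Set.range fun i => (m : ℚ) • v i)) :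
    L.relIndex N ≠ 0 ∧ (∀ i, q i ∣ L.relIndex N) ∧
      ∀ p : ℕ, p.Prime → (∃ j, p ∣ q j) →
        ∃ x : N ⧸ L.addSubgroupOf N, addOrderOf x = p :=
  stmt9_general n hn q hq v hv hv0 e he m hm N hN L hL
end
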